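/- Let G ∈ ℝ^{m×n}, b ∈ ℝ^m, A_c ∈ ℝ^{n×n}, γ > 0, and suppose there exists H ∈ ℝ^{m×m} such that every entry of H + γI is nonnegative, HG = GA_c, and Hb ≤ 0. Then for every x ∈ ℝⁿ with Gx ≤ b, we have G·(x + γ^{-1}·A_c·x) ≤ b; that is, (I + γ^{-1}A_c)·P ⊆ P for the polyhedron P = {x : Gx ≤ b}. -/

import Mathlib

/-! The matrix `H + γI` is nonnegative, so it preserves the order `Gx ≤ b`; together with `Hb ≤ 0`
this gives `HGx + γGx ≤ γb`. Since `HG = GAc`, the left side is `γ G(x + γ⁻¹ Ac x)`. -/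

namespace Matrix

variable {𝕜 ι κ : Type*} [Fintype κ]

theorem mulVec_mono_of_nonneg [Semiring 𝕜] [PartialOrder 𝕜] [IsOrderedRing 𝕜]
    {M : Matrix ι κ 𝕜} (hM : ∀ i j, 0 ≤ M i j) {u v : κ → 𝕜} (huv : u ≤ v) :
    M *ᵥ u ≤ M *ᵥ v :=
  fun i => dotProduct_le_dotProduct_of_nonneg_left huv (hM i)

theorem mulVec_add_smul_le_smul [Fintype ι] [DecidableEq ι] [CommSemiring 𝕜] [PartialOrder 𝕜]
    [IsOrderedRing 𝕜] {H : Matrix ι ι 𝕜} {γ : 𝕜} (hH : ∀ i j, 0 ≤ (H + γ • 1) i j)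
    {b y : ι → 𝕜} (hHb : H *ᵥ b ≤ 0) (hyb : y ≤ b) :
    H *ᵥ y + γ • y ≤ γ • b :=
  calc H *ᵥ y + γ • y = (H + γ • 1) *ᵥ y := by rw [add_mulVec, smul_mulVec, one_mulVec]
    _ ≤ (H + γ • 1) *ᵥ b := mulVec_mono_of_nonneg hH hyb
    _ = H *ᵥ b + γ • b := by rw [add_mulVec, smul_mulVec, one_mulVec]
    _ ≤ γ • b := add_le_of_nonpos_left hHb

theorem mulVec_add_inv_smul_mulVec_le [Fintype ι] [DecidableEq ι] [Field 𝕜] [LinearOrder 𝕜]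
    [IsStrictOrderedRing 𝕜] {G : Matrix ι κ 𝕜} {Ac : Matrix κ κ 𝕜} {H : Matrix ι ι 𝕜}
    {γ : 𝕜} (hγ : 0 < γ) (hH : ∀ i j, 0 ≤ (H + γ • 1) i j) (hHG : H * G = G * Ac)
    {b : ι → 𝕜} (hHb : H *ᵥ b ≤ 0) {x : κ → 𝕜} (hx : G *ᵥ x ≤ b) :
    G *ᵥ (x + γ⁻¹ • Ac *ᵥ x) ≤ b := by
  have hGAc : G *ᵥ (Ac *ᵥ x) = H *ᵥ (G *ᵥ x) := by
    rw [mulVec_mulVec, mulVec_mulVec, hHG]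
  have hscaled : γ • G *ᵥ (x + γ⁻¹ • Ac *ᵥ x) = H *ᵥ (G *ᵥ x) + γ • G *ᵥ x := by
    rw [mulVec_add, mulVec_smul, hGAc, smul_add, smul_inv_smul₀ hγ.ne', add_comm]
  have hle := mulVec_add_smul_le_smul hH hHb hx
  rw [← hscaled] at hle
  exact (smul_le_smul_iff_of_pos_left hγ).mp hle

end Matrix

/-- If `γ > 0` and some `H` satisfies `H + γI ≥ 0`, `HG = G Ac`,
and `Hb ≤ 0`, then `(I + γ⁻¹ Ac) x ∈ P` for every `x ∈ P = {x : Gx ≤ b}`. -/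
theorem stmt_11 {m n : ℕ} (G : Matrix (Fin m) (Fin n) ℝ) (b : Fin m → ℝ)
    (Ac : Matrix (Fin n) (Fin n) ℝ) (γ : ℝ) (hγ : 0 < γ)
    (hH : ∃ H : Matrix (Fin m) (Fin m) ℝ,
      (∀ i j, 0 ≤ (H + γ • (1 : Matrix (Fin m) (Fin m) ℝ)) i j) ∧
        H * G = G * Ac ∧ ∀ i, H.mulVec b i ≤ 0) :
    ∀ x : Fin n → ℝ, (∀ i, G.mulVec x i ≤ b i) →
      ∀ i, G.mulVec (x + γ⁻¹ • Ac.mulVec x) i ≤ b i := by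
  obtain ⟨H, hH, hHG, hHb⟩ := hH
  exact fun x hx => Matrix.mulVec_add_inv_smul_mulVec_le hγ hH hHG hHb hx
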